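/- With C = {(s,t,u) ∈ ℝ³ : 0 < t < 1, 0 < u < 2t², u < 2(1−t)², 1 − 2s = 0} and D = {(s,t,u) ∈ ℝ³ : 0 < s < 1, 0 < u < 1/2, (1−u)² − su > 0, (1−u)² − (1−s)u > 0, 1 − 2t + tu − su = 0}, the intersection C ∩ D equals the segment {(1/2, 1/2, u) ∈ ℝ³ : 0 < u < 1/2}; in particular C ∩ D is nonempty. -/
import Mathlib


/-- The component C of S⁰ lying on the hypersurface 1 − 2s = 0. -/
def Cpiece : Set (ℝ × ℝ × ℝ) :=
  {p | 0 < p.2.1 ∧ p.2.1 < 1 ∧ 0 < p.2.2 ∧ p.2.2 < 2 * p.2.1 ^ 2 ∧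
    p.2.2 < 2 * (1 - p.2.1) ^ 2 ∧ 1 - 2 * p.1 = 0}

/-- The component D of S⁰ lying on the hypersurface 1 − 2t + tu − su = 0. -/
def Dpiece : Set (ℝ × ℝ × ℝ) :=
  {p | 0 < p.1 ∧ p.1 < 1 ∧ 0 < p.2.2 ∧ p.2.2 < 1/2 ∧
    (1 - p.2.2) ^ 2 - p.1 * p.2.2 > 0 ∧
    (1 - p.2.2) ^ 2 - (1 - p.1) * p.2.2 > 0 ∧
    1 - 2 * p.2.1 + p.2.1 * p.2.2 - p.1 * p.2.2 = 0}

/-- C ∩ D is the segment {(1/2, 1/2, u) : 0 < u < 1/2}; in particular it is nonempty. -/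
theorem Cpiece_inter_Dpiece :
    Cpiece ∩ Dpiece = {p : ℝ × ℝ × ℝ | p.1 = 1/2 ∧ p.2.1 = 1/2 ∧
      0 < p.2.2 ∧ p.2.2 < 1/2} ∧ (Cpiece ∩ Dpiece).Nonempty := by
  have heq : Cpiece ∩ Dpiece = {p : ℝ × ℝ × ℝ | p.1 = 1/2 ∧ p.2.1 = 1/2 ∧
      0 < p.2.2 ∧ p.2.2 < 1/2} := by
    ext ⟨s, t, u⟩
    simp only [Cpiece, Dpiece, Set.mem_inter_iff, Set.mem_setOf_eq]
    constructor
    · rintro ⟨⟨ht0, ht1, hu0, _, _, hs⟩, _, _, _, hu, _, _, heq⟩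
      have hs' : s = 1/2 := by linarith
      have ht' : t = 1/2 := by
        subst hs'
        have h2u : u - 2 < 0 := by linarith
        have : t * (u - 2) = (1/2) * (u - 2) := by ring_nf; nlinarith [heq]
        have := mul_right_cancel₀ (by linarith : u - 2 ≠ 0) this
        linarith
      exact ⟨hs', ht', hu0, hu⟩
    · rintro ⟨hs, ht, hu0, hu⟩
      subst hs; subst ht
      refine ⟨⟨by norm_num, by norm_num, hu0, by norm_num [hu], by norm_num [hu], by norm_num⟩,
        by norm_num, by norm_num, hu0, hu, by nlinarith, by nlinarith, by ring⟩
  refine ⟨heq, ?_⟩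
  rw [heq]
  exact ⟨(1/2, 1/2, 1/4), by norm_num⟩
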